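/- The constant 1/2 in the upper bound of the generalised trapezoid inequality for convex functions is sharp: for every constant D < 1/2 there exist real numbers a < b, a convex function f : [a,b] → ℝ with finite one-sided derivatives f′₊(a), f′₋(b), and a point x ∈ [a,b] such that (x−a)·f(a) + (b−x)·f(b) − ∫_a^b f(t) dt > D·[ (b−x)²·f′₋(b) − (x−a)²·f′₊(a) ]. (Indeed f(t) = |t − (a+b)/2| and x = (a+b)/2 witness this.) -/

import Mathlib

open MeasureTheory Set intervalIntegral

/-! The tent `t ↦ |t|` on `[-c, c]`, evaluated at the midpoint, is an equality case of the
upper bound with constant `1/2`: the trapezoid gap `c²` equals half of the derivative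
term `c² · 1 - c² · (-1)`. Since the derivative term is positive, any smaller constant fails. -/

theorem integral_abs_neg_to_self {c : ℝ} (hc : 0 ≤ c) : ∫ t in -c..c, |t| = c ^ 2 := by
  have h_pos : ∫ t in (0 : ℝ)..c, |t| = c ^ 2 / 2 := by
    rw [integral_congr fun t ht => abs_of_nonneg (uIcc_of_le hc ▸ ht).1, integral_id]
    ring
  have h_neg : ∫ t in -c..0, |t| = c ^ 2 / 2 := by
    simpa only [abs_neg, neg_zero, ← h_pos] using
      (integral_comp_neg (a := 0) (b := c) (fun t : ℝ => |t|)).symm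
  rw [← integral_add_adjacent_intervals (b := 0) intervalIntegrable_id.abs
    intervalIntegrable_id.abs, h_neg, h_pos]
  ring

theorem abs_trapezoid_gap_at_midpoint {c : ℝ} (hc : 0 ≤ c) :
    (0 - -c) * |-c| + (c - 0) * |c| - ∫ t in -c..c, |t| =
      1 / 2 * ((c - 0) ^ 2 * 1 - (0 - -c) ^ 2 * (-1)) := by
  rw [integral_abs_neg_to_self hc, abs_neg, abs_of_nonneg hc]
  ring

theorem trapezoid_convex_upper_bound_sharp (D : ℝ) (hD : D < 1 / 2) :
    ∃ a b : ℝ, a < b ∧ ∃ f : ℝ → ℝ, ConvexOn ℝ (Set.Icc a b) f ∧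
      ∃ A B : ℝ,
        HasDerivWithinAt f A (Set.Ici a) a ∧
        HasDerivWithinAt f B (Set.Iic b) b ∧
        ∃ x ∈ Set.Icc a b,
          (x - a) * f a + (b - x) * f b - (∫ t in a..b, f t) >
            D * ((b - x) ^ 2 * B - (x - a) ^ 2 * A) := by
  refine ⟨-1, 1, by norm_num, (|·|), convexOn_norm (convex_Icc _ _), -1, 1,
    hasDerivWithinAt_abs_neg _ (by norm_num), hasDerivWithinAt_abs_pos _ (by norm_num),
    0, by norm_num, ?_⟩
  rw [gt_iff_lt, abs_trapezoid_gap_at_midpoint zero_le_one]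
  have h_deriv_term_pos : (0 : ℝ) < (1 - 0) ^ 2 * 1 - (0 - -1) ^ 2 * (-1) := by norm_num
  exact mul_lt_mul_of_pos_right hD h_deriv_term_pos
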